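/- arXiv:2008.03454 — 2 statements merged into one kernel-verified Lean document; each statement's English description precedes it below -/
import Mathlib

section
/- The Cholesky map ℒ : SPD(m) → Chol(m), sending an SPD matrix S to its unique Cholesky factor, is a homeomorphism: it is a bijection, it is continuous, and its inverse L ↦ L Lᵀ is continuous (both sets carrying the subspace topology from the space of m×m real matrices). -/
open Matrix

/-- `L` is lower triangular with strictly positive diagonal entries. -/
def IsLowerTriPos {m : ℕ} (L : Matrix (Fin m) (Fin m) ℝ) : Prop :=
  (∀ i j : Fin m, i < j → L i j = 0) ∧ (∀ i : Fin m, 0 < L i i)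

/-- The Cholesky factor of `S`: the unique lower triangular matrix with positive
diagonal such that `S = L * Lᵀ` (junk value if no such factor exists). -/
noncomputable def chol {m : ℕ} (S : Matrix (Fin m) (Fin m) ℝ) :
    Matrix (Fin m) (Fin m) ℝ := by
  classical
  exact if h : ∃ L : Matrix (Fin m) (Fin m) ℝ, IsLowerTriPos L ∧ S = L * Lᵀ then h.choose else 1

section Aux

open Filter Topology

variable {m : ℕ}

lemma IsLowerTriPos.bt {L : Matrix (Fin m) (Fin m) ℝ} (h : IsLowerTriPos L) :
    L.BlockTriangular OrderDual.toDual := fun i j hij => h.1 i j hij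

lemma bt_det [DecidableEq (Fin m)] {L : Matrix (Fin m) (Fin m) ℝ} (h : L.BlockTriangular OrderDual.toDual) :
    L.det = ∏ i, L i i :=
  Matrix.det_of_lowerTriangular L h

lemma IsLowerTriPos.det_pos [DecidableEq (Fin m)] {L : Matrix (Fin m) (Fin m) ℝ} (h : IsLowerTriPos L) :
    0 < L.det := by
  rw [bt_det h.bt]
  exact Finset.prod_pos fun i _ => h.2 i

lemma IsLowerTriPos.isUnit_det [DecidableEq (Fin m)] {L : Matrix (Fin m) (Fin m) ℝ} (h : IsLowerTriPos L) :
    IsUnit L.det :=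
  h.det_pos.ne'.isUnit

/-- diagonal entry of products of lower triangular matrices -/
lemma mul_bt_diag {M N : Matrix (Fin m) (Fin m) ℝ} (hM : M.BlockTriangular OrderDual.toDual)
    (hN : N.BlockTriangular OrderDual.toDual) (i : Fin m) : (M * N) i i = M i i * N i i := by
  rw [Matrix.mul_apply]
  apply Finset.sum_eq_single_of_mem i (Finset.mem_univ i)
  intro k _ hk
  rcases lt_or_gt_of_ne hk with hlt | hgt
  · rw [hN (by exact hlt), mul_zero]
  · rw [hM (by exact hgt), zero_mul]

/-- Uniqueness of the Cholesky factor. -/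
lemma lowerTriPos_unique {L₁ L₂ : Matrix (Fin m) (Fin m) ℝ} (h₁ : IsLowerTriPos L₁)
    (h₂ : IsLowerTriPos L₂) (h : L₁ * L₁ᵀ = L₂ * L₂ᵀ) : L₁ = L₂ := by
  have hu₁ := h₁.isUnit_det
  have hu₂ := h₂.isUnit_det
  haveI : Invertible L₂ := L₂.invertibleOfIsUnitDet hu₂
  set A := L₂⁻¹ * L₁ with hA
  have hAbt : A.BlockTriangular OrderDual.toDual :=
    (blockTriangular_inv_of_blockTriangular h₂.bt).mul h₁.bt
  have hAAT : A * Aᵀ = 1 := by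
    rw [hA, Matrix.transpose_mul, Matrix.transpose_nonsing_inv]
    calc L₂⁻¹ * L₁ * (L₁ᵀ * (L₂ᵀ)⁻¹) = L₂⁻¹ * (L₁ * L₁ᵀ) * (L₂ᵀ)⁻¹ := by
          simp only [Matrix.mul_assoc]
      _ = L₂⁻¹ * L₂ * (L₂ᵀ * (L₂ᵀ)⁻¹) := by rw [h]; simp only [Matrix.mul_assoc]
      _ = 1 := by
          rw [Matrix.nonsing_inv_mul _ hu₂, Matrix.mul_nonsing_inv _ (by rwa [Matrix.det_transpose]),
            Matrix.one_mul]
  haveI : Invertible A := invertibleOfRightInverse A Aᵀ hAAT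
  have hAinv : A⁻¹ = Aᵀ := Matrix.inv_eq_right_inv hAAT
  have hATbt : Aᵀ.BlockTriangular OrderDual.toDual := by
    rw [← hAinv]; exact blockTriangular_inv_of_blockTriangular hAbt
  -- A is diagonal with positive entries
  have hdiagpos : ∀ i, 0 < A i i := by
    intro i
    have h1 : L₂⁻¹ i i * L₂ i i = 1 := by
      have := mul_bt_diag (blockTriangular_inv_of_blockTriangular h₂.bt) h₂.bt i
      rw [Matrix.nonsing_inv_mul _ hu₂, Matrix.one_apply_eq] at this; exact this.symm
    have h2 : 0 < L₂⁻¹ i i := by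
      rcases mul_pos_iff.mp (h1 ▸ one_pos) with ⟨ha, _⟩ | ⟨_, hb⟩
      · exact ha
      · exact absurd (h₂.2 i) (not_lt.mpr hb.le)
    have := mul_bt_diag (blockTriangular_inv_of_blockTriangular h₂.bt) h₁.bt i
    rw [hA, this]
    exact mul_pos h2 (h₁.2 i)
  have hoffdiag : ∀ i j, i ≠ j → A i j = 0 := by
    intro i j hij
    rcases lt_or_gt_of_ne hij with hlt | hgt
    · exact hAbt (by exact hlt)
    · have := hATbt (show OrderDual.toDual i < OrderDual.toDual j from hgt)
      simpa using this
  have hAone : A = 1 := by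
    ext i j
    by_cases hij : i = j
    · subst hij
      have h1 : (A * Aᵀ) i i = A i i * A i i := by
        rw [Matrix.mul_apply]
        apply Finset.sum_eq_single_of_mem i (Finset.mem_univ i)
        intro k _ hk
        rw [Matrix.transpose_apply, hoffdiag i k (fun h => hk h.symm), zero_mul]
      rw [hAAT, Matrix.one_apply_eq] at h1
      have := (mul_self_eq_one_iff).mp h1.symm
      rcases this with h | h
      · rw [h, Matrix.one_apply_eq]
      · exact absurd (hdiagpos i) (by rw [h]; norm_num)
    · rw [hoffdiag i j hij, Matrix.one_apply_ne hij]
  have : L₂ * A = L₂ := by rw [hAone, Matrix.mul_one]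
  rw [hA, ← Matrix.mul_assoc, Matrix.mul_nonsing_inv _ hu₂, Matrix.one_mul] at this
  exact this


lemma posdef_conj [DecidableEq (Fin m)] {S B : Matrix (Fin m) (Fin m) ℝ} (hS : S.PosDef) (hB : IsUnit B.det) :
    (B * S * Bᵀ).PosDef := by
  rw [posDef_iff_dotProduct_mulVec]
  constructor
  · rw [Matrix.IsHermitian, conjTranspose_eq_transpose_of_trivial, Matrix.transpose_mul,
      Matrix.transpose_mul, Matrix.transpose_transpose]
    have hSt : Sᵀ = S := by
      rw [← conjTranspose_eq_transpose_of_trivial]; exact hS.1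
    rw [hSt, Matrix.mul_assoc]
  · intro x hx
    have hBx : Bᵀ *ᵥ x ≠ 0 := by
      intro h0
      have hinj : Function.Injective (Bᵀ).mulVec :=
        mulVec_injective_iff_isUnit.mpr ((Matrix.isUnit_iff_isUnit_det _).mpr
          (by rwa [Matrix.det_transpose]))
      exact hx (hinj (by rw [h0, Matrix.mulVec_zero]))
    have hpos := (posDef_iff_dotProduct_mulVec.mp hS).2 (x := Bᵀ *ᵥ x) hBx
    simp only [star_trivial] at hpos ⊢
    calc (0:ℝ) < (Bᵀ *ᵥ x) ⬝ᵥ (S *ᵥ (Bᵀ *ᵥ x)) := hpos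
      _ = x ⬝ᵥ (B * S * Bᵀ) *ᵥ x := by
          rw [← Matrix.mulVec_mulVec, ← Matrix.mulVec_mulVec, Matrix.dotProduct_mulVec x B,
            ← Matrix.mulVec_transpose]

lemma exists_cholfactor {S : Matrix (Fin m) (Fin m) ℝ} (hS : S.PosDef) :
    ∃ L, IsLowerTriPos L ∧ S = L * Lᵀ := by
  letI instDE : DecidableEq (Fin m) := fun a b => LinearOrder.toDecidableEq a b
  haveI h1 : WellFoundedLT (Fin m) := inferInstance
  haveI h2 : LocallyFiniteOrderBot (Fin m) := inferInstance
  haveI hInv : Invertible (LDL.lowerInv hS) := LDL.invertibleLowerInv hS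
  set A := LDL.lower hS with hAdef
  have hLIbt : (LDL.lowerInv hS).BlockTriangular OrderDual.toDual := fun i j hij =>
    LDL.lowerInv_triangular hS hij
  have hAbt : A.BlockTriangular OrderDual.toDual := blockTriangular_inv_of_blockTriangular hLIbt
  have hDpos : ∀ i, 0 < LDL.diagEntries hS i := by
    have h1 : LDL.diag hS = LDL.lowerInv hS * S * (LDL.lowerInv hS)ᵀ := by
      rw [← conjTranspose_eq_transpose_of_trivial]; exact LDL.diag_eq_lowerInv_conj hS
    have h2 : (LDL.diag hS).PosDef := by
      rw [h1]; exact posdef_conj hS (Matrix.isUnit_det_of_invertible _)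
    rw [LDL.diag] at h2
    exact posDef_diagonal_iff.mp h2
  set M := A * diagonal (fun i => Real.sqrt (LDL.diagEntries hS i)) with hM
  have hMbt : M.BlockTriangular OrderDual.toDual := hAbt.mul (blockTriangular_diagonal _)
  have hMMT : M * Mᵀ = S := by
    rw [hM, Matrix.transpose_mul, Matrix.diagonal_transpose]
    calc A * diagonal (fun i => Real.sqrt (LDL.diagEntries hS i)) *
          (diagonal (fun i => Real.sqrt (LDL.diagEntries hS i)) * Aᵀ)
        = A * (diagonal (fun i => Real.sqrt (LDL.diagEntries hS i)) *
            diagonal (fun i => Real.sqrt (LDL.diagEntries hS i))) * Aᵀ := by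
          simp only [Matrix.mul_assoc]
      _ = A * LDL.diag hS * Aᵀ := by
          rw [Matrix.diagonal_mul_diagonal, LDL.diag,
            show (fun i => Real.sqrt (LDL.diagEntries hS i) * Real.sqrt (LDL.diagEntries hS i)) =
              LDL.diagEntries hS from funext fun i => Real.mul_self_sqrt (hDpos i).le]
      _ = S := by
          rw [← conjTranspose_eq_transpose_of_trivial]; exact LDL.lower_conj_diag hS
  have hdetM : M.det ≠ 0 := by
    intro h0
    have hdet : (M * Mᵀ).det = S.det := by rw [hMMT]
    rw [Matrix.det_mul, Matrix.det_transpose, h0, mul_zero] at hdet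
    exact hS.det_pos.ne' hdet.symm
  have hMdiag : ∀ i, M i i ≠ 0 := by
    intro i h0
    exact hdetM (by rw [bt_det hMbt]; exact Finset.prod_eq_zero (Finset.mem_univ i) h0)
  set E := diagonal (fun i => if 0 < M i i then (1:ℝ) else -1) with hE
  have hEE : E * Eᵀ = 1 := by
    rw [hE, Matrix.diagonal_transpose, Matrix.diagonal_mul_diagonal]
    have : (fun i => (if 0 < M i i then (1:ℝ) else -1) * (if 0 < M i i then (1:ℝ) else -1)) =
        fun _ => (1:ℝ) := by
      funext i; split <;> norm_num
    rw [this, Matrix.diagonal_one]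
  refine ⟨M * E, ⟨?_, ?_⟩, ?_⟩
  · intro i j hij
    exact (hMbt.mul (blockTriangular_diagonal _)) (show OrderDual.toDual j < OrderDual.toDual i from hij)
  · intro i
    rw [mul_bt_diag hMbt (blockTriangular_diagonal _) i, Matrix.diagonal_apply_eq]
    rcases lt_trichotomy 0 (M i i) with h | h | h
    · rw [if_pos h, mul_one]; exact h
    · exact absurd h.symm (hMdiag i)
    · rw [if_neg (asymm h), mul_neg_one]; linarith
  · rw [Matrix.transpose_mul, Matrix.mul_assoc, ← Matrix.mul_assoc E, hEE, Matrix.one_mul, hMMT]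

lemma chol_eq {S L : Matrix (Fin m) (Fin m) ℝ} (hL : IsLowerTriPos L) (hSL : S = L * Lᵀ) :
    chol S = L := by
  have hex : ∃ L' : Matrix (Fin m) (Fin m) ℝ, IsLowerTriPos L' ∧ S = L' * L'ᵀ := ⟨L, hL, hSL⟩
  rw [chol, dif_pos hex]
  exact lowerTriPos_unique hex.choose_spec.1 hL (hex.choose_spec.2 ▸ hSL ▸ rfl)

lemma chol_spec {S : Matrix (Fin m) (Fin m) ℝ} (hS : S.PosDef) :
    IsLowerTriPos (chol S) ∧ S = chol S * (chol S)ᵀ := by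
  obtain ⟨L, hL, hSL⟩ := exists_cholfactor hS
  rw [chol_eq hL hSL]
  exact ⟨hL, hSL⟩

lemma posdef_mul_transpose {L : Matrix (Fin m) (Fin m) ℝ} (h : IsLowerTriPos L) :
    (L * Lᵀ).PosDef := by
  have := posdef_conj (Matrix.PosDef.one (n := Fin m) (R := ℝ)) h.isUnit_det
  rwa [Matrix.mul_one] at this


section Cont

attribute [local instance] Matrix.normedAddCommGroup Matrix.normedSpace

lemma chol_tendsto {S : ℕ → Matrix (Fin m) (Fin m) ℝ} {T : Matrix (Fin m) (Fin m) ℝ}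
    (hSpd : ∀ n, (S n).PosDef) (hT : T.PosDef) (h : Tendsto S atTop (𝓝 T)) :
    Tendsto (fun n => chol (S n)) atTop (𝓝 (chol T)) := by
  obtain ⟨C, hC⟩ := h.norm.bddAbove_range
  have hC' : ∀ n, ‖S n‖ ≤ C := fun n => hC (Set.mem_range_self n)
  have hball : ∀ n, chol (S n) ∈ Metric.closedBall (0 : Matrix (Fin m) (Fin m) ℝ)
      (Real.sqrt C) := by
    intro n
    rw [Metric.mem_closedBall, dist_zero_right,
      Matrix.norm_le_iff (Real.sqrt_nonneg C)]
    intro i j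
    have hspec := chol_spec (hSpd n)
    set L := chol (S n) with hL
    have hsum : S n i i = ∑ k, L i k * L i k := by
      rw [hspec.2, Matrix.mul_apply]
      simp [Matrix.transpose_apply]
    have hle : L i j * L i j ≤ ∑ k, L i k * L i k :=
      Finset.single_le_sum (f := fun k => L i k * L i k)
        (fun k _ => mul_self_nonneg _) (Finset.mem_univ j)
    have hSC : S n i i ≤ C := by
      refine le_trans (le_abs_self _) (le_trans ?_ (hC' n))
      rw [← Real.norm_eq_abs]
      exact (S n).norm_entry_le_entrywise_sup_norm
    rw [Real.norm_eq_abs]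
    exact Real.abs_le_sqrt (by rw [pow_two]; linarith)
  apply tendsto_of_subseq_tendsto
  intro ns hns
  obtain ⟨L₀, _, ms, hms, hconv⟩ :=
    (isCompact_closedBall (0 : Matrix (Fin m) (Fin m) ℝ) (Real.sqrt C)).tendsto_subseq
      (x := fun k => chol (S (ns k))) (fun k => hball (ns k))
  refine ⟨ms, ?_⟩
  have hS' : Tendsto (fun k => S (ns (ms k))) atTop (𝓝 T) := h.comp (hns.comp hms.tendsto_atTop)
  have hmul : Tendsto (fun k => chol (S (ns (ms k))) * (chol (S (ns (ms k))))ᵀ) atTop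
      (𝓝 (L₀ * L₀ᵀ)) := by
    have hcont : Continuous fun M : Matrix (Fin m) (Fin m) ℝ => M * Mᵀ :=
      continuous_id.matrix_mul continuous_id.matrix_transpose
    exact (hcont.tendsto L₀).comp hconv
  have hTL : T = L₀ * L₀ᵀ := by
    refine tendsto_nhds_unique ?_ hmul
    convert hS' using 1
    funext k
    exact ((chol_spec (hSpd (ns (ms k)))).2).symm
  have helem : ∀ i j : Fin m, Tendsto (fun k => chol (S (ns (ms k))) i j) atTop (𝓝 (L₀ i j)) :=
    fun i j => ((continuous_id.matrix_elem i j).tendsto L₀).comp hconv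
  have htri : ∀ i j : Fin m, i < j → L₀ i j = 0 := by
    intro i j hij
    have h0 : (fun k => chol (S (ns (ms k))) i j) = fun _ => (0:ℝ) :=
      funext fun k => (chol_spec (hSpd (ns (ms k)))).1.1 i j hij
    have h2 : Tendsto (fun k => chol (S (ns (ms k))) i j) atTop (𝓝 0) := by
      rw [h0]; exact tendsto_const_nhds
    exact tendsto_nhds_unique (helem i j) h2
  have hdiag0 : ∀ i : Fin m, 0 ≤ L₀ i i := by
    intro i
    exact ge_of_tendsto' (helem i i) fun k => ((chol_spec (hSpd (ns (ms k)))).1.2 i).le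
  have hbt : L₀.BlockTriangular OrderDual.toDual := fun i j hij => htri i j hij
  have hdet : L₀.det ≠ 0 := by
    intro h0
    have : T.det = L₀.det * L₀ᵀ.det := by rw [hTL, Matrix.det_mul]
    rw [Matrix.det_transpose, h0, mul_zero] at this
    exact hT.det_pos.ne' this
  have hdiagpos : ∀ i : Fin m, 0 < L₀ i i := by
    intro i
    rcases (hdiag0 i).lt_or_eq with hlt | heq
    · exact hlt
    · exact absurd (by rw [bt_det hbt]; exact Finset.prod_eq_zero (Finset.mem_univ i) heq.symm)
        hdet
  have : chol T = L₀ := chol_eq ⟨fun i j hij => htri i j hij, hdiagpos⟩ hTL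
  rw [this]
  exact hconv

end Cont

end Aux

/-- The Cholesky map `ℒ : SPD(m) → Chol(m)` is a homeomorphism (for the subspace
topologies): it is a bijection, continuous, and its inverse `L ↦ L * Lᵀ` is continuous. -/
theorem cholesky_map_homeomorph (m : ℕ) :
    ∃ e : { S : Matrix (Fin m) (Fin m) ℝ // S.PosDef } ≃ₜ
          { L : Matrix (Fin m) (Fin m) ℝ // IsLowerTriPos L },
      (∀ S : { S : Matrix (Fin m) (Fin m) ℝ // S.PosDef },
        (e S : Matrix (Fin m) (Fin m) ℝ) = chol (S : Matrix (Fin m) (Fin m) ℝ)) ∧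
      (∀ L : { L : Matrix (Fin m) (Fin m) ℝ // IsLowerTriPos L },
        (e.symm L : Matrix (Fin m) (Fin m) ℝ) =
          (L : Matrix (Fin m) (Fin m) ℝ) * (L : Matrix (Fin m) (Fin m) ℝ)ᵀ) := by
  haveI hfc : FirstCountableTopology (Matrix (Fin m) (Fin m) ℝ) :=
    inferInstanceAs (FirstCountableTopology (Fin m → Fin m → ℝ))
  refine ⟨{ toFun := fun S => ⟨chol S.1, (chol_spec S.2).1⟩,
            invFun := fun L => ⟨L.1 * L.1ᵀ, posdef_mul_transpose L.2⟩,
            left_inv := fun S => Subtype.ext ((chol_spec S.2).2).symm,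
            right_inv := fun L => Subtype.ext (chol_eq L.2 rfl),
            continuous_toFun := ?_,
            continuous_invFun := ?_ }, fun S => rfl, fun L => rfl⟩
  · refine Continuous.subtype_mk ?_ _
    rw [continuous_iff_seqContinuous]
    intro u x hux
    exact chol_tendsto (fun n => (u n).2) x.2 ((continuous_subtype_val.tendsto x).comp hux)
  · exact Continuous.subtype_mk
      (continuous_subtype_val.matrix_mul continuous_subtype_val.matrix_transpose) _
end

section
/- A subset K ⊆ SPD(m) is compact (in the subspace topology from the space of m×m real matrices) if and only if its image V(K) ⊆ ℝ^{m(m+1)/2} is compact; i.e., V maps compact sets to compact sets and V⁻¹ maps compact sets to compact sets. -/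
open Matrix MeasureTheory ProbabilityTheory
open scoped BigOperators

/-- The strictly lower triangular part of a matrix. -/
def strictLower {m : ℕ} (M : Matrix (Fin m) (Fin m) ℝ) : Matrix (Fin m) (Fin m) ℝ :=
  fun i j => if j < i then M i j else 0

/-- The diagonal part of a matrix, with the scalar logarithm applied entrywise. -/
noncomputable def logDiag {m : ℕ} (M : Matrix (Fin m) (Fin m) ℝ) : Matrix (Fin m) (Fin m) ℝ :=
  fun i j => if i = j then Real.log (M i i) else 0

/-- The squared Frobenius norm. -/
def froSq {m : ℕ} (M : Matrix (Fin m) (Fin m) ℝ) : ℝ := ∑ i, ∑ j, (M i j) ^ 2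

/-- The log-Cholesky distance on lower triangular matrices with positive diagonal. -/
noncomputable def dC {m : ℕ} (L K : Matrix (Fin m) (Fin m) ℝ) : ℝ :=
  Real.sqrt (froSq (strictLower L - strictLower K) + froSq (logDiag L - logDiag K))

/-- Index set for the on-or-below-diagonal entries of an `m × m` matrix;
it has exactly `m * (m + 1) / 2` elements. -/
abbrev LowIdx (m : ℕ) := { p : Fin m × Fin m // p.2 ≤ p.1 }

/-- The log-Cholesky vectorization `V : SPD(m) → ℝ^{m(m+1)/2}`: the strictly lower
triangular entries of the Cholesky factor together with the logarithms of its diagonal. -/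
noncomputable def Vmap {m : ℕ} (S : Matrix (Fin m) (Fin m) ℝ) :
    EuclideanSpace ℝ (LowIdx m) :=
  WithLp.toLp 2 (fun p : LowIdx m => if p.1.2 = p.1.1 then Real.log (chol S p.1.1 p.1.1) else chol S p.1.1 p.1.2)


namespace CholAux

variable {m : ℕ}

/-- diagonal entry of a product of lower triangular matrices -/
lemma lower_mul_diag {B C : Matrix (Fin m) (Fin m) ℝ}
    (hB : ∀ i j : Fin m, i < j → B i j = 0) (hC : ∀ i j : Fin m, i < j → C i j = 0)
    (i : Fin m) : (B * C) i i = B i i * C i i := by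
  rw [Matrix.mul_apply]
  refine Finset.sum_eq_single i (fun k _ hk => ?_) (by simp)
  rcases lt_or_gt_of_ne hk with h | h
  · rw [hC _ _ h, mul_zero]
  · rw [hB _ _ h, zero_mul]

lemma lowerTri_blockTriangular {B : Matrix (Fin m) (Fin m) ℝ}
    (hB : ∀ i j : Fin m, i < j → B i j = 0) :
    B.BlockTriangular OrderDual.toDual := fun i j h => hB i j h

lemma IsLowerTriPos_det {L : Matrix (Fin m) (Fin m) ℝ}
    (hL : (∀ i j : Fin m, i < j → L i j = 0) ∧ (∀ i : Fin m, 0 < L i i)) : 0 < L.det := by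
  rw [Matrix.det_of_lowerTriangular L (lowerTri_blockTriangular hL.1)]
  exact Finset.prod_pos fun i _ => hL.2 i

lemma posDef_conj {S A : Matrix (Fin m) (Fin m) ℝ} (hS : S.PosDef) (hA : IsUnit A.det) :
    (A * S * Aᵀ).PosDef := by
  rw [Matrix.posDef_iff_dotProduct_mulVec]
  constructor
  · have h1 : Sᵀ = S := hS.1
    show (A * S * Aᵀ)ᴴ = A * S * Aᵀ
    rw [Matrix.conjTranspose_eq_transpose_of_trivial]
    rw [Matrix.transpose_mul, Matrix.transpose_mul, Matrix.transpose_transpose, h1,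
      Matrix.mul_assoc]
  · intro x hx
    have hx' : Aᵀ *ᵥ x ≠ 0 := by
      intro h
      apply hx
      have hAT : IsUnit Aᵀ := by
        rw [Matrix.isUnit_iff_isUnit_det, Matrix.det_transpose]; exact hA
      have hinj : Function.Injective (Aᵀ).mulVec := mulVec_injective_iff_isUnit.2 hAT
      exact hinj (h.trans (Matrix.mulVec_zero _).symm)
    have key : star x ⬝ᵥ ((A * S * Aᵀ) *ᵥ x) = star (Aᵀ *ᵥ x) ⬝ᵥ (S *ᵥ (Aᵀ *ᵥ x)) := by
      simp only [star_trivial]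
      rw [← Matrix.mulVec_mulVec, ← Matrix.mulVec_mulVec, Matrix.dotProduct_mulVec,
        Matrix.mulVec_transpose]
    rw [key]
    exact hS.dotProduct_mulVec_pos hx'

instance wfltFin {m : ℕ} : WellFoundedLT (Fin m) := inferInstance

lemma exists_cholesky {S : Matrix (Fin m) (Fin m) ℝ} (hS : S.PosDef) :
    ∃ L : Matrix (Fin m) (Fin m) ℝ,
      ((∀ i j : Fin m, i < j → L i j = 0) ∧ (∀ i : Fin m, 0 < L i i)) ∧ S = L * Lᵀ := by
  set A := LDL.lowerInv hS with hA
  have hAtri : ∀ i j : Fin m, i < j → A i j = 0 := fun i j h => LDL.lowerInv_triangular hS h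
  have hAdet : IsUnit A.det := by
    have e : (fun a b => LinearOrder.toDecidableEq a b : DecidableEq (Fin m)) = instDecidableEqFin m :=
      Subsingleton.elim _ _
    have h := @Matrix.isUnit_det_of_invertible (Fin m) ℝ _
        (fun a b => LinearOrder.toDecidableEq a b) _ _ (LDL.invertibleLowerInv hS)
    rw [e] at h
    exact h
  haveI : Invertible A := A.invertibleOfIsUnitDet hAdet
  set B := A⁻¹ with hB
  have hBtri : ∀ i j : Fin m, i < j → B i j = 0 := by
    have h2 := Matrix.blockTriangular_inv_of_blockTriangular (lowerTri_blockTriangular hAtri)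
    exact fun i j h => h2 h
  have hBA : B * A = 1 := A.nonsing_inv_mul hAdet
  have hBii : ∀ i, B i i * A i i = 1 := fun i => by
    rw [← lower_mul_diag hBtri hAtri, hBA, Matrix.one_apply_eq]
  have hBne : ∀ i, B i i ≠ 0 := fun i h => by simpa [h] using hBii i
  set d := LDL.diagEntries hS with hd
  have E : LDL.diag hS = Matrix.diagonal d := by
    unfold LDL.diag
    exact congrArg (fun i : DecidableEq (Fin m) => @Matrix.diagonal (Fin m) ℝ i _ d)
      (Subsingleton.elim _ _)
  have hdiagonal : Matrix.diagonal d = A * S * Aᵀ := by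
    have h := LDL.diag_eq_lowerInv_conj hS
    rw [Matrix.conjTranspose_eq_transpose_of_trivial, E] at h
    exact h
  have hdpos : ∀ i, 0 < d i := by
    rw [← Matrix.posDef_diagonal_iff, hdiagonal]
    exact posDef_conj hS hAdet
  have hS' : S = B * Matrix.diagonal d * Bᵀ := by
    have key : B * (A * S * Aᵀ) * Bᵀ = S := by
      simp only [← Matrix.mul_assoc]
      rw [hBA, Matrix.one_mul, Matrix.mul_assoc, ← Matrix.transpose_mul, hBA,
        Matrix.transpose_one, Matrix.mul_one]
    rw [← key, ← hdiagonal]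
  set c : Fin m → ℝ := fun i => if B i i < 0 then -1 else 1 with hc
  set v : Fin m → ℝ := fun i => c i * Real.sqrt (d i) with hv
  have hvv : ∀ i, v i * v i = d i := by
    intro i
    have hcc : c i * c i = 1 := by
      simp only [hc]; split_ifs <;> norm_num
    calc v i * v i = (c i * c i) * (Real.sqrt (d i) * Real.sqrt (d i)) := by ring
      _ = d i := by rw [hcc, Real.mul_self_sqrt (hdpos i).le, one_mul]
  refine ⟨B * Matrix.diagonal v, ⟨⟨fun i j hij => ?_, fun i => ?_⟩, ?_⟩⟩
  · rw [Matrix.mul_diagonal, hBtri i j hij, zero_mul]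
  · rw [Matrix.mul_diagonal]
    show 0 < B i i * (c i * Real.sqrt (d i))
    have hsq : 0 < Real.sqrt (d i) := Real.sqrt_pos.2 (hdpos i)
    simp only [hc]
    rcases lt_or_gt_of_ne (hBne i) with h | h
    · rw [if_pos h]; nlinarith
    · rw [if_neg (not_lt.2 h.le)]; nlinarith
  · rw [hS']
    rw [Matrix.transpose_mul, Matrix.diagonal_transpose]
    have hvd : Matrix.diagonal v * (Matrix.diagonal v * Bᵀ) = Matrix.diagonal d * Bᵀ := by
      rw [← Matrix.mul_assoc, Matrix.diagonal_mul_diagonal]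
      congr 1
      exact congrArg Matrix.diagonal (funext hvv)
    rw [Matrix.mul_assoc, Matrix.mul_assoc, hvd]

lemma cholesky_unique {L N : Matrix (Fin m) (Fin m) ℝ}
    (hL1 : ∀ i j : Fin m, i < j → L i j = 0) (hL2 : ∀ i : Fin m, 0 < L i i)
    (hN1 : ∀ i j : Fin m, i < j → N i j = 0) (hN2 : ∀ i : Fin m, 0 < N i i)
    (h : L * Lᵀ = N * Nᵀ) : L = N := by
  have hLdet : IsUnit L.det := isUnit_iff_ne_zero.2 (IsLowerTriPos_det ⟨hL1, hL2⟩).ne'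
  have hNdet : IsUnit N.det := isUnit_iff_ne_zero.2 (IsLowerTriPos_det ⟨hN1, hN2⟩).ne'
  have hLTdet : IsUnit Lᵀ.det := by rwa [Matrix.det_transpose]
  have hNTdet : IsUnit Nᵀ.det := by rwa [Matrix.det_transpose]
  haveI : Invertible L := L.invertibleOfIsUnitDet hLdet
  haveI : Invertible N := N.invertibleOfIsUnitDet hNdet
  haveI : Invertible Lᵀ := Lᵀ.invertibleOfIsUnitDet hLTdet
  haveI : Invertible Nᵀ := Nᵀ.invertibleOfIsUnitDet hNTdet
  set Am := N⁻¹ * L with hAm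
  have hNinv_tri : ∀ i j : Fin m, i < j → N⁻¹ i j = 0 := by
    have h2 := Matrix.blockTriangular_inv_of_blockTriangular (lowerTri_blockTriangular hN1)
    exact fun i j hij => h2 hij
  have hlower : ∀ i j : Fin m, i < j → Am i j = 0 := by
    have h2 := (lowerTri_blockTriangular hNinv_tri).mul (lowerTri_blockTriangular hL1)
    exact fun i j hij => h2 hij
  have hAmAlt : Am = Nᵀ * (Lᵀ)⁻¹ := by
    have key : N⁻¹ * (L * Lᵀ) * (Lᵀ)⁻¹ = N⁻¹ * (N * Nᵀ) * (Lᵀ)⁻¹ := by rw [h]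
    rw [← Matrix.mul_assoc, Matrix.mul_assoc (N⁻¹ * L), Matrix.mul_nonsing_inv _ hLTdet,
      Matrix.mul_one, ← Matrix.mul_assoc, Matrix.nonsing_inv_mul _ hNdet, Matrix.one_mul]
      at key
    exact key
  have hupper : ∀ i j : Fin m, j < i → Am i j = 0 := by
    have hNT : Nᵀ.BlockTriangular id := fun i j hij => hN1 j i hij
    have hLT : Lᵀ.BlockTriangular id := fun i j hij => hL1 j i hij
    have h2 : ((Lᵀ)⁻¹).BlockTriangular id := Matrix.blockTriangular_inv_of_blockTriangular hLT
    have h3 := hNT.mul h2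
    rw [← hAmAlt] at h3
    exact fun i j hij => h3 hij
  have hAmT_lower : ∀ i j : Fin m, i < j → Amᵀ i j = 0 := fun i j hij => hupper j i hij
  have hAmAmT : Am * Amᵀ = 1 := by
    rw [hAm, Matrix.transpose_mul, Matrix.transpose_nonsing_inv, Matrix.mul_assoc,
      ← Matrix.mul_assoc L, h, Matrix.mul_assoc, Matrix.mul_nonsing_inv _ hNTdet,
      Matrix.mul_one]
    exact Matrix.nonsing_inv_mul _ hNdet
  have hdiag1 : ∀ i : Fin m, Am i i = 1 := by
    intro i
    have hsq : Am i i * Am i i = 1 := by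
      have h2 := lower_mul_diag hlower hAmT_lower i
      rw [hAmAmT, Matrix.one_apply_eq] at h2
      have h3 : Amᵀ i i = Am i i := rfl
      rw [h3] at h2
      exact h2.symm
    have hpos : 0 < Am i i := by
      have hd := lower_mul_diag hNinv_tri hL1 i
      have hNii : N⁻¹ i i * N i i = 1 := by
        have h2 := lower_mul_diag hNinv_tri hN1 i
        rw [Matrix.nonsing_inv_mul _ hNdet, Matrix.one_apply_eq] at h2
        exact h2.symm
      have : 0 < N⁻¹ i i := by
        rcases lt_trichotomy (N⁻¹ i i) 0 with hc | hc | hc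
        · nlinarith [hN2 i]
        · rw [hc] at hNii; norm_num at hNii
        · exact hc
      rw [hAm] at *
      rw [hd]
      exact mul_pos this (hL2 i)
    nlinarith
  have hAm1 : Am = 1 := by
    ext i j
    rcases lt_trichotomy i j with hij | hij | hij
    · rw [hlower i j hij, (Matrix.one_apply_ne (ne_of_lt hij)).symm]
    · subst hij; rw [hdiag1 i, Matrix.one_apply_eq]
    · rw [hupper i j hij, (Matrix.one_apply_ne (ne_of_gt hij)).symm]
  have := congrArg (fun M => N * M) hAm1
  simpa [hAm, Matrix.mul_nonsing_inv_cancel_left _ _ hNdet] using this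

lemma chol_eq {S L : Matrix (Fin m) (Fin m) ℝ} (hL : IsLowerTriPos L) (h : S = L * Lᵀ) :
    chol S = L := by
  have hex : ∃ L' : Matrix (Fin m) (Fin m) ℝ, IsLowerTriPos L' ∧ S = L' * L'ᵀ := ⟨L, hL, h⟩
  unfold chol
  rw [dif_pos hex]
  have hspec := hex.choose_spec
  exact cholesky_unique hspec.1.1 hspec.1.2 hL.1 hL.2 (by rw [← hspec.2, ← h])

lemma chol_spec {S : Matrix (Fin m) (Fin m) ℝ} (hS : S.PosDef) :
    IsLowerTriPos (chol S) ∧ S = chol S * (chol S)ᵀ := by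
  obtain ⟨L, hL, h⟩ := exists_cholesky hS
  have hL' : IsLowerTriPos L := ⟨hL.1, hL.2⟩
  rw [chol_eq hL' h]
  exact ⟨hL', h⟩

/-- The matrix built from a log-Cholesky vector. -/
noncomputable def buildL (x : EuclideanSpace ℝ (LowIdx m)) : Matrix (Fin m) (Fin m) ℝ :=
  fun i j =>
    if h : j < i then x ⟨(i, j), h.le⟩
    else if j = i then Real.exp (x ⟨(i, i), le_rfl⟩) else 0

lemma buildL_lowerTriPos (x : EuclideanSpace ℝ (LowIdx m)) : IsLowerTriPos (buildL x) := by
  constructor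
  · intro i j hij
    unfold buildL
    rw [dif_neg (asymm hij), if_neg (ne_of_gt hij)]
  · intro i
    unfold buildL
    rw [dif_neg (lt_irrefl i), if_pos rfl]
    exact Real.exp_pos _

/-- The inverse log-Cholesky map. -/
noncomputable def Wmap (x : EuclideanSpace ℝ (LowIdx m)) : Matrix (Fin m) (Fin m) ℝ :=
  buildL x * (buildL x)ᵀ

lemma chol_Wmap (x : EuclideanSpace ℝ (LowIdx m)) : chol (Wmap x) = buildL x :=
  chol_eq (buildL_lowerTriPos x) rfl

lemma buildL_Vmap {S : Matrix (Fin m) (Fin m) ℝ} (hS : S.PosDef) :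
    buildL (Vmap S) = chol S := by
  obtain ⟨hlt, _⟩ := chol_spec hS
  ext i j
  unfold buildL Vmap
  by_cases h : j < i
  · rw [dif_pos h]
    simp only [if_neg (ne_of_lt h)]
  · by_cases h' : j = i
    · subst h'
      rw [dif_neg (lt_irrefl j), if_pos rfl]
      show Real.exp (if j = j then Real.log (chol S j j) else chol S j j) = chol S j j
      rw [if_pos rfl, Real.exp_log (hlt.2 j)]
    · have hij : i < j := (not_lt.mp h).lt_of_ne (fun e => h' e.symm)
      rw [dif_neg h, if_neg h']
      exact (hlt.1 i j hij).symm

lemma Wmap_Vmap {S : Matrix (Fin m) (Fin m) ℝ} (hS : S.PosDef) : Wmap (Vmap S) = S := by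
  unfold Wmap
  rw [buildL_Vmap hS]
  exact (chol_spec hS).2.symm

lemma Vmap_Wmap (x : EuclideanSpace ℝ (LowIdx m)) : Vmap (Wmap x) = x := by
  ext p
  obtain ⟨⟨i, j⟩, hp⟩ := p
  unfold Vmap
  rw [chol_Wmap]
  by_cases h : j = i
  · subst h
    simp only [if_pos rfl]
    show Real.log (buildL x j j) = x ⟨(j, j), hp⟩
    unfold buildL
    rw [dif_neg (lt_irrefl j), if_pos rfl, Real.log_exp]
  · simp only [if_neg h]
    have hj : j < i := hp.lt_of_ne h
    show buildL x i j = x ⟨(i, j), hp⟩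
    unfold buildL
    rw [dif_pos hj]

lemma continuous_buildL_entry (i j : Fin m) :
    Continuous (fun x : EuclideanSpace ℝ (LowIdx m) => buildL x i j) := by
  unfold buildL
  by_cases h : j < i
  · simp only [dif_pos h]
    exact PiLp.continuous_apply 2 _ _
  · simp only [dif_neg h]
    by_cases h' : j = i
    · simp only [if_pos h']
      exact Real.continuous_exp.comp (PiLp.continuous_apply 2 _ _)
    · simp only [if_neg h']
      exact continuous_const

lemma continuous_Wmap :
    Continuous (Wmap : EuclideanSpace ℝ (LowIdx m) → Matrix (Fin m) (Fin m) ℝ) := by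
  apply continuous_pi; intro i; apply continuous_pi; intro j
  have hfun : (fun x : EuclideanSpace ℝ (LowIdx m) => Wmap x i j)
      = fun x => ∑ k, buildL x i k * buildL x j k := by
    funext x
    simp [Wmap, Matrix.mul_apply, Matrix.transpose_apply]
  rw [hfun]
  exact continuous_finset_sum _ fun k _ =>
    (continuous_buildL_entry i k).mul (continuous_buildL_entry j k)

lemma sq_entry_le_froSq (M : Matrix (Fin m) (Fin m) ℝ) (i j : Fin m) :
    (M i j) ^ 2 ≤ froSq M := by
  unfold froSq
  have h1 : (M i j) ^ 2 ≤ ∑ j', (M i j') ^ 2 :=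
    Finset.single_le_sum (fun k _ => sq_nonneg (M i k)) (Finset.mem_univ j)
  refine h1.trans ?_
  exact Finset.single_le_sum
    (fun k _ => Finset.sum_nonneg fun l _ => sq_nonneg (M k l)) (Finset.mem_univ i)

lemma continuous_froSq : Continuous (froSq : Matrix (Fin m) (Fin m) ℝ → ℝ) := by
  unfold froSq
  refine continuous_finset_sum _ fun i _ => continuous_finset_sum _ fun j _ => ?_
  exact ((continuous_apply j).comp (continuous_apply i)).pow 2

lemma isCompact_box (R : ℝ) :
    IsCompact {x : EuclideanSpace ℝ (LowIdx m) | ∀ p, x p ∈ Set.Icc (-R) R} := by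
  have h1 : IsCompact (Set.pi Set.univ fun _ : LowIdx m => Set.Icc (-R) R) :=
    isCompact_univ_pi fun _ => isCompact_Icc
  have h2 := h1.image (PiLp.continuous_toLp 2 (fun _ : LowIdx m => ℝ))
  convert h2 using 1
  ext x
  constructor
  · intro hx
    exact ⟨WithLp.equiv 2 _ x, fun p _ => hx p, rfl⟩
  · rintro ⟨y, hy, rfl⟩
    exact fun p => hy p (Set.mem_univ p)

end CholAux

/-- A set `K` of SPD matrices is compact (in the subspace topology from matrix space, i.e.
compact as a subset of matrix space) if and only if its image `V '' K ⊆ ℝ^{m(m+1)/2}`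
is compact: `V` preserves compact sets in both directions. -/
theorem compact_iff_Vmap_image_compact {m : ℕ} (K : Set (Matrix (Fin m) (Fin m) ℝ))
    (hK : ∀ S ∈ K, Matrix.PosDef S) :
    IsCompact K ↔ IsCompact (Vmap '' K) := by
  constructor
  · intro hc
    rcases K.eq_empty_or_nonempty with rfl | hne
    · rw [Set.image_empty]; exact isCompact_empty
    have himg : Vmap '' K = CholAux.Wmap ⁻¹' K := by
      ext x
      constructor
      · rintro ⟨S, hSK, rfl⟩
        show CholAux.Wmap (Vmap S) ∈ K
        rw [CholAux.Wmap_Vmap (hK S hSK)]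
        exact hSK
      · intro hx
        exact ⟨CholAux.Wmap x, hx, CholAux.Vmap_Wmap x⟩
    rw [himg]
    obtain ⟨S₁, hS₁K, hmax⟩ := hc.exists_isMaxOn hne CholAux.continuous_froSq.continuousOn
    set C := froSq S₁ with hCdef
    obtain ⟨S₀, hS₀K, hmin⟩ := hc.exists_isMinOn hne continuous_id.matrix_det.continuousOn
    set δ := Matrix.det S₀ with hδdef
    have hδ : 0 < δ := (hK S₀ hS₀K).det_pos
    set B := max (Real.sqrt (Real.sqrt C)) 1 with hBdef
    have hB1 : (1 : ℝ) ≤ B := le_max_right _ _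
    have hB0 : (0 : ℝ) < B := lt_of_lt_of_le one_pos hB1
    set ε := Real.sqrt δ / B ^ (m - 1) with hεdef
    have hε0 : 0 < ε := div_pos (Real.sqrt_pos.2 hδ) (pow_pos hB0 _)
    set R := max B (max (-Real.log ε) (Real.log B)) with hRdef
    refine IsCompact.of_isClosed_subset (CholAux.isCompact_box R)
      (hc.isClosed.preimage CholAux.continuous_Wmap) ?_
    intro x hx
    set L := CholAux.buildL x with hLdef
    have hLpos := CholAux.buildL_lowerTriPos x
    have hdiagS : ∀ i, CholAux.Wmap x i i = ∑ k, (L i k) ^ 2 := by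
      intro i
      simp [CholAux.Wmap, Matrix.mul_apply, Matrix.transpose_apply, sq, ← hLdef]
    have hCnn : 0 ≤ C := by
      show (0:ℝ) ≤ froSq S₁
      unfold froSq
      exact Finset.sum_nonneg fun i _ => Finset.sum_nonneg fun j _ => sq_nonneg _
    have hSentry : ∀ i, CholAux.Wmap x i i ≤ Real.sqrt C := by
      intro i
      have h1 : (CholAux.Wmap x i i) ^ 2 ≤ C :=
        (CholAux.sq_entry_le_froSq _ i i).trans (isMaxOn_iff.1 hmax _ hx)
      have h2 : 0 ≤ CholAux.Wmap x i i := by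
        rw [hdiagS]
        exact Finset.sum_nonneg fun k _ => sq_nonneg _
      exact (Real.le_sqrt h2 hCnn).2 h1
    have hsqC : Real.sqrt C ≤ B ^ 2 := by
      have h1 : Real.sqrt (Real.sqrt C) ≤ B := le_max_left _ _
      nlinarith [Real.sq_sqrt (Real.sqrt_nonneg C), Real.sqrt_nonneg (Real.sqrt C)]
    have hLsq : ∀ i j, (L i j) ^ 2 ≤ B ^ 2 := by
      intro i j
      have h1 : (L i j) ^ 2 ≤ ∑ k, (L i k) ^ 2 :=
        Finset.single_le_sum (f := fun k => L i k ^ 2) (fun k _ => sq_nonneg _)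
          (Finset.mem_univ j)
      have h2 : (∑ k, (L i k) ^ 2) ≤ Real.sqrt C := (hdiagS i) ▸ hSentry i
      linarith
    have hLB : ∀ i j, |L i j| ≤ B := by
      intro i j
      have h1 := hLsq i j
      rw [abs_le]
      constructor <;> nlinarith
    have hdetL : L.det = ∏ i, L i i :=
      Matrix.det_of_lowerTriangular L (CholAux.lowerTri_blockTriangular hLpos.1)
    have hdetS : (CholAux.Wmap x).det = (∏ i, L i i) ^ 2 := by
      show (L * Lᵀ).det = _
      rw [Matrix.det_mul, Matrix.det_transpose, hdetL, sq]
    have hprodpos : 0 < ∏ i, L i i := Finset.prod_pos fun i _ => hLpos.2 i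
    have hprod : Real.sqrt δ ≤ ∏ i, L i i := by
      have h1 : δ ≤ (∏ i, L i i) ^ 2 := by
        rw [← hdetS]
        exact isMinOn_iff.1 hmin _ hx
      nlinarith [Real.sq_sqrt hδ.le, Real.sqrt_nonneg δ]
    have hub : ∀ k, L k k ≤ B := fun k => (abs_le.1 (hLB k k)).2
    have hdiagLB : ∀ i, ε ≤ L i i := by
      intro i
      have hrest : (∏ k ∈ Finset.univ.erase i, L k k) ≤ B ^ (m - 1) := by
        have h1 : (∏ k ∈ Finset.univ.erase i, L k k) ≤ ∏ _k ∈ Finset.univ.erase i, B :=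
          Finset.prod_le_prod (fun k _ => (hLpos.2 k).le) (fun k _ => hub k)
        rw [Finset.prod_const] at h1
        have hcard : (Finset.univ.erase i).card = m - 1 := by
          rw [Finset.card_erase_of_mem (Finset.mem_univ i), Finset.card_univ, Fintype.card_fin]
        rwa [hcard] at h1
      have hsplit : L i i * ∏ k ∈ Finset.univ.erase i, L k k = ∏ k, L k k :=
        Finset.mul_prod_erase Finset.univ (fun k => L k k) (Finset.mem_univ i)
      rw [hεdef, div_le_iff₀ (pow_pos hB0 _)]
      calc Real.sqrt δ ≤ ∏ k, L k k := hprod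
        _ = L i i * ∏ k ∈ Finset.univ.erase i, L k k := hsplit.symm
        _ ≤ L i i * B ^ (m - 1) := mul_le_mul_of_nonneg_left hrest (hLpos.2 i).le
    intro p
    obtain ⟨⟨i, j⟩, hp⟩ := p
    rcases eq_or_lt_of_le hp with heq | hlt2
    · have hpt : (⟨(i, j), hp⟩ : LowIdx m) = ⟨(i, i), le_rfl⟩ := by
        apply Subtype.ext
        exact Prod.ext rfl heq
      have hxL : L i i = Real.exp (x ⟨(i, i), le_rfl⟩) := by
        show CholAux.buildL x i i = _
        unfold CholAux.buildL
        rw [dif_neg (lt_irrefl i), if_pos rfl]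
      have hlog : x ⟨(i, i), le_rfl⟩ = Real.log (L i i) := by
        rw [hxL, Real.log_exp]
      show x ⟨(i, j), hp⟩ ∈ Set.Icc (-R) R
      rw [hpt, Set.mem_Icc, hlog]
      constructor
      · have h2 : Real.log ε ≤ Real.log (L i i) :=
          Real.log_le_log hε0 (hdiagLB i)
        have h3 : -R ≤ Real.log ε := by
          have : -Real.log ε ≤ R := le_trans (le_max_left _ _) (le_max_right _ _)
          linarith
        linarith
      · have h2 : Real.log (L i i) ≤ Real.log B :=
          Real.log_le_log (hLpos.2 i) (hub i)
        have h3 : Real.log B ≤ R := le_trans (le_max_right _ _) (le_max_right _ _)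
        linarith
    · have hxL : x ⟨(i, j), hp⟩ = L i j := by
        show _ = CholAux.buildL x i j
        unfold CholAux.buildL
        rw [dif_pos hlt2]
      rw [Set.mem_Icc, hxL]
      have h1 := abs_le.1 (hLB i j)
      have h2 : B ≤ R := le_max_left _ _
      exact ⟨by linarith [h1.1], by linarith [h1.2]⟩
  · intro hc
    have hKeq : K = CholAux.Wmap '' (Vmap '' K) := by
      ext S
      constructor
      · intro hSK
        exact ⟨Vmap S, ⟨S, hSK, rfl⟩, CholAux.Wmap_Vmap (hK S hSK)⟩
      · rintro ⟨y, ⟨S', hS'K, rfl⟩, rfl⟩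
        rw [CholAux.Wmap_Vmap (hK S' hS'K)]
        exact hS'K
    rw [hKeq]
    exact hc.image CholAux.continuous_Wmap
end
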